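/- arXiv:1007.2913 — 2 statements merged into one kernel-verified Lean document; each statement's English description precedes it below -/
import Mathlib

section
/- Let m, n be positive integers, lM, lN positive integers with lM < lN, r = ⌊m/lM⌋, s = ⌊n/lN⌋, and suppose (m mod lM) + (n mod lN) < lN. Let (d_1, ..., d_k) be positive integers with d_1 + ... + d_k = m + n, where exactly r' of the d_i satisfy lM ≤ d_i < lN and the remaining k - r' satisfy d_i ≥ lN, and suppose the sum of those r' values is at most m. Then k ≤ r + s. -/
/-!
The `#A` parts lie in `[lM, lN)` and sum to at most `m`, so `#A ≤ m / lM`; each of the other parts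
is at least `lN`. Raising every part of `A` from `lM` to `lN` costs at most `(m / lM) * (lN - lM)`,
so `k * lN ≤ (m / lM + n / lN) * lN + (m % lM + n % lN)`, and the hypothesis on the remainders
leaves no room for one more multiple of `lN`.
-/

open Finset

theorem Nat.add_le_div_add_div {m n p q a b : ℕ} (hp : 0 < p) (hpq : p ≤ q)
    (hmod : m % p + n % q < q) (ha : a * p ≤ m) (hab : a * p + b * q ≤ m + n) :
    a + b ≤ m / p + n / q := by
  have ha_le : a ≤ m / p := (Nat.le_div_iff_mul_le hp).2 ha
  -- `(m / p - a) * (q - p) ≥ 0`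
  have hraise : a * q + m / p * p ≤ a * p + m / p * q := by
    obtain ⟨c, hc⟩ := Nat.exists_eq_add_of_le ha_le
    obtain ⟨e, rfl⟩ := Nat.exists_eq_add_of_le hpq
    rw [hc]
    ring_nf
    omega
  have hm := Nat.div_add_mod' m p
  have hn := Nat.div_add_mod' n q
  have hlt : (a + b) * q < (m / p + n / q + 1) * q := by nlinarith
  exact Nat.lt_succ_iff.1 (Nat.lt_of_mul_lt_mul_right hlt)

theorem stmt7_general (m n lM lN : ℕ) (hlM : 0 < lM)
    (hlt : lM < lN) (r s : ℕ) (hr : r = m / lM) (hs : s = n / lN)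
    (hmod : m % lM + n % lN < lN)
    (k : ℕ) (d : Fin k → ℕ)
    (hsum : ∑ i, d i = m + n)
    (A : Finset (Fin k))
    (hA : ∀ i ∈ A, lM ≤ d i ∧ d i < lN) (hAc : ∀ i ∉ A, lN ≤ d i)
    (hAsum : ∑ i ∈ A, d i ≤ m) :
    k ≤ r + s := by
  have hA_ge : #A * lM ≤ ∑ i ∈ A, d i := by
    simpa using A.card_nsmul_le_sum d lM fun i hi => (hA i hi).1
  have hAc_ge : #Aᶜ * lN ≤ ∑ i ∈ Aᶜ, d i := by
    simpa using Aᶜ.card_nsmul_le_sum d lN fun i hi => hAc i (mem_compl.1 hi)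
  have hk : #A + #Aᶜ = k := by simp
  have hsplit := A.sum_add_sum_compl d
  rw [hr, hs, ← hk]
  exact Nat.add_le_div_add_div hlM hlt.le hmod (hA_ge.trans hAsum) (by omega)

/-- combinatorial heart of Theorem 3.8. -/
theorem stmt7 (m n lM lN : ℕ) (hm : 0 < m) (hn : 0 < n) (hlM : 0 < lM)
    (hlt : lM < lN) (r s : ℕ) (hr : r = m / lM) (hs : s = n / lN)
    (hmod : m % lM + n % lN < lN)
    (k r' : ℕ) (d : Fin k → ℕ) (hdpos : ∀ i, 0 < d i)
    (hsum : ∑ i, d i = m + n)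
    (A : Finset (Fin k)) (hcard : A.card = r')
    (hA : ∀ i ∈ A, lM ≤ d i ∧ d i < lN) (hAc : ∀ i ∉ A, lN ≤ d i)
    (hAsum : ∑ i ∈ A, d i ≤ m) :
    k ≤ r + s :=
  stmt7_general m n lM lN hlM hlt r s hr hs hmod k d hsum A hA hAc hAsum
end

section
/- Let m_1 ≤ m_2 ≤ ... ≤ m_n be positive integers and let (d_1, ..., d_k) be positive integers with d_1 + ... + d_k = m_1 + ... + m_n and each d_i ∈ {m_1, ..., m_n} satisfying d_i ≥ m_1. Write the multiset {m_1, ..., m_n} with distinct values r_1 < ... < r_l occurring with multiplicities s_1, ..., s_l, and write the multiset {d_1, ..., d_k} with the value r_i occurring with multiplicity s_i'. If for each p the weighted partial sum condition r_1 s_1' + ... + r_p s_p' ≤ r_1 s_1 + ... + r_p s_p holds, then k ≤ n. -/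
/-!
Counting fibres, `n = ∑ s p` and `k = ∑ s' p`. Put `x p = r p * (s p - s' p)`: the hypothesis says
that every partial sum of `x` is nonnegative, and `n - k = ∑ x p / r p`. The weights `1 / r p`
decrease, so by Abel summation this weighted sum is nonnegative as well.
-/

open Finset

theorem mul_sum_le_sum_mul_of_partial_sums_nonneg {ι K : Type*} [LinearOrder ι]
    [Semiring K] [PartialOrder K] [IsOrderedRing K] {w x : ι → K} (s : Finset ι)
    (hw : AntitoneOn w s) (hx : ∀ p ∈ s, 0 ≤ ∑ i ∈ s with i ≤ p, x i)
    {c : K} (hc : ∀ i ∈ s, c ≤ w i) :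
    c * ∑ i ∈ s, x i ≤ ∑ i ∈ s, w i * x i := by
  induction s using Finset.induction_on_max generalizing c with
  | empty => simp
  | insert a s ha ih =>
    have ha' : a ∉ s := fun h => lt_irrefl a (ha a h)
    have hpartial : ∀ p ∈ s, ∑ i ∈ insert a s with i ≤ p, x i = ∑ i ∈ s with i ≤ p, x i := by
      intro p hp
      rw [filter_insert, if_neg (not_le.2 (ha p hp))]
    have hwa : ∀ i ∈ s, w a ≤ w i := fun i hi =>
      hw (mem_insert_of_mem hi) (mem_insert_self a s) (ha i hi).le
    have hsum_s := ih (hw.mono (by simp)) (fun p hp => hpartial p hp ▸ hx p (mem_insert_of_mem hp)) hwa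
    have htotal : 0 ≤ ∑ i ∈ insert a s, x i := by
      simpa [filter_true_of_mem fun i hi => (mem_insert.1 hi).elim le_of_eq fun h => (ha i h).le]
        using hx a (mem_insert_self a s)
    calc c * ∑ i ∈ insert a s, x i ≤ w a * ∑ i ∈ insert a s, x i :=
          mul_le_mul_of_nonneg_right (hc a (mem_insert_self a s)) htotal
      _ = w a * x a + w a * ∑ i ∈ s, x i := by rw [sum_insert ha', mul_add]
      _ ≤ w a * x a + ∑ i ∈ s, w i * x i := add_le_add_right hsum_s _
      _ = ∑ i ∈ insert a s, w i * x i := by rw [sum_insert ha']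

theorem sum_le_sum_of_weighted_partial_sums_le {ι K : Type*} [Fintype ι] [LinearOrder ι]
    [Field K] [LinearOrder K] [IsStrictOrderedRing K] {r a b : ι → K}
    (hr0 : ∀ i, 0 < r i) (hr : Monotone r)
    (h : ∀ p, ∑ i with i ≤ p, r i * a i ≤ ∑ i with i ≤ p, r i * b i) :
    ∑ i, a i ≤ ∑ i, b i := by
  have key := mul_sum_le_sum_mul_of_partial_sums_nonneg (w := fun i => (r i)⁻¹)
    (x := fun i => r i * b i - r i * a i) (c := 0) univ
    (fun i _ j _ hij => inv_anti₀ (hr0 i) (hr hij))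
    (fun p _ => by simpa [sum_sub_distrib] using h p)
    (fun i _ => (inv_pos.2 (hr0 i)).le)
  simp only [zero_mul, ← mul_sub, inv_mul_cancel_left₀ (hr0 _).ne'] at key
  simpa [sum_sub_distrib] using key

theorem card_eq_sum_card_filter_eq {ι κ α : Type*} [Fintype ι] [Fintype κ] [DecidableEq α]
    {f : ι → α} {r : κ → α} (hr : Function.Injective r) (hf : ∀ i, ∃ p, f i = r p) :
    Fintype.card ι = ∑ p, #{i | f i = r p} := by
  classical
  choose g hg using hf
  rw [← card_univ, card_eq_sum_card_fiberwise (f := g) (t := univ) fun _ _ => mem_univ _]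
  simp only [hg, hr.eq_iff]

theorem stmt8_general (n k l : ℕ) (m : Fin n → ℕ) (hmpos : ∀ j, 0 < m j)
    (d : Fin k → ℕ) (hdval : ∀ i, ∃ j, d i = m j)
    (r : Fin l → ℕ) (hr : StrictMono r)
    (hrval : ∀ j, ∃ p, m j = r p) (hrsurj : ∀ p, ∃ j, m j = r p)
    (s s' : Fin l → ℕ)
    (hs : ∀ p, s p = (Finset.univ.filter (fun j => m j = r p)).card)
    (hs' : ∀ p, s' p = (Finset.univ.filter (fun i => d i = r p)).card)
    (hpartial : ∀ p : Fin l,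
      ∑ i ∈ Finset.univ.filter (fun i => i ≤ p), r i * s' i ≤
      ∑ i ∈ Finset.univ.filter (fun i => i ≤ p), r i * s i) :
    k ≤ n := by
  have hn : n = ∑ p, s p := by
    simpa [hs] using card_eq_sum_card_filter_eq hr.injective hrval
  have hk : k = ∑ p, s' p := by
    simpa [hs'] using card_eq_sum_card_filter_eq hr.injective fun i =>
      let ⟨j, hj⟩ := hdval i; let ⟨p, hp⟩ := hrval j; ⟨p, hj.trans hp⟩
  have hr0 : ∀ p, 0 < (r p : ℚ) := fun p => by
    obtain ⟨j, hj⟩ := hrsurj p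
    exact_mod_cast hj ▸ hmpos j
  have hkn := sum_le_sum_of_weighted_partial_sums_le (K := ℚ) (a := fun p => (s' p : ℚ))
    (b := fun p => (s p : ℚ)) hr0 (fun _ _ h => Nat.cast_le.2 (hr.monotone h))
    fun p => by exact_mod_cast hpartial p
  rw [hn, hk]
  exact_mod_cast hkn

/-- combinatorial content of Theorem 3.10. Given sphere dimensions
`m 1 ≤ … ≤ m n` (positive) with distinct values `r 1 < … < r l` of multiplicities
`s p`, and a tuple `(d 1, …, d k)` of values among the `m j` with multiplicities
`s' p` for the value `r p`, if `∑ d = ∑ m` and every weighted partial sum satisfies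
`r_1 s'_1 + ⋯ + r_p s'_p ≤ r_1 s_1 + ⋯ + r_p s_p`, then `k ≤ n`. -/
theorem stmt8 (n k l : ℕ) (m : Fin n → ℕ) (hmpos : ∀ j, 0 < m j)
    (hmono : Monotone m)
    (d : Fin k → ℕ) (hdval : ∀ i, ∃ j, d i = m j)
    (r : Fin l → ℕ) (hr : StrictMono r)
    (hrval : ∀ j, ∃ p, m j = r p) (hrsurj : ∀ p, ∃ j, m j = r p)
    (s s' : Fin l → ℕ)
    (hs : ∀ p, s p = (Finset.univ.filter (fun j => m j = r p)).card)
    (hs' : ∀ p, s' p = (Finset.univ.filter (fun i => d i = r p)).card)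
    (hsum : ∑ i, d i = ∑ j, m j)
    (hpartial : ∀ p : Fin l,
      ∑ i ∈ Finset.univ.filter (fun i => i ≤ p), r i * s' i ≤
      ∑ i ∈ Finset.univ.filter (fun i => i ≤ p), r i * s i) :
    k ≤ n :=
  stmt8_general n k l m hmpos d hdval r hr hrval hrsurj s s' hs hs' hpartial
end
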